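/- arXiv:1410.1045 — 6 statements merged into one kernel-verified Lean document; each statement's English description precedes it below -/
import Mathlib

section
/- In the formal power series ring, (1/T) - c/((1+T)^c - 1) = ∑_{n≥1} (1 - c^n)·(B_n/n)·X^{n-1}/(n-1)!, where 1+T = e^X and B_n are Bernoulli numbers. -/
/-!
Multiplying by `X`, the series on the right becomes `B(X) - B(cX)`, where
`B(X) = X/(e^X - 1)` is the Bernoulli generating function. Since `B(X)(e^X - 1) = X` and,
after rescaling, `B(cX)(e^{cX} - 1) = cX`, both sides of the cleared identity become
`X(e^{cX} - 1) - cX(e^X - 1)`, and `X` can be cancelled in the domain `ℚ⟦X⟧`.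
-/

open PowerSeries
open scoped Nat

theorem rescale_bernoulliPowerSeries_mul_rescale_exp_sub_one {A : Type*} [CommRing A]
    [Algebra ℚ A] (c : A) :
    rescale c (bernoulliPowerSeries A) * (rescale c (exp A) - 1) = C c * X := by
  rw [← map_one (rescale c), ← map_sub, ← map_mul, bernoulliPowerSeries_mul_exp_sub_one,
    rescale_X]

theorem X_mul_mk_one_sub_pow_mul_bernoulli (c : ℚ) :
    (X : ℚ⟦X⟧) * mk (fun k => (1 - c ^ (k + 1)) * bernoulli (k + 1) / ((k + 1)! : ℚ)) =
      bernoulliPowerSeries ℚ - rescale c (bernoulliPowerSeries ℚ) := by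
  ext n
  simp only [bernoulliPowerSeries, rescale_mk, Algebra.algebraMap_self, RingHom.id_apply]
  rcases n with _ | k
  · simp
  · simp only [coeff_succ_X_mul, coeff_mk, map_sub]
    ring

theorem stmt_1_general (c : ℕ) :
    (rescale (c : ℚ) (exp ℚ) - 1) - (c : ℚ) • (exp ℚ - 1) =
      (PowerSeries.mk fun k =>
          (1 - (c : ℚ) ^ (k + 1)) * bernoulli (k + 1) / (Nat.factorial (k + 1) : ℚ)) *
        (exp ℚ - 1) * (rescale (c : ℚ) (exp ℚ) - 1) := by
  refine mul_left_cancel₀ (X_ne_zero : (X : ℚ⟦X⟧) ≠ 0) ?_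
  calc X * ((rescale (c : ℚ) (exp ℚ) - 1) - (c : ℚ) • (exp ℚ - 1))
      = bernoulliPowerSeries ℚ * (exp ℚ - 1) * (rescale (c : ℚ) (exp ℚ) - 1)
          - rescale (c : ℚ) (bernoulliPowerSeries ℚ) * (rescale (c : ℚ) (exp ℚ) - 1)
            * (exp ℚ - 1) := by
        rw [bernoulliPowerSeries_mul_exp_sub_one,
          rescale_bernoulliPowerSeries_mul_rescale_exp_sub_one, smul_eq_C_mul]
        ring
    _ = X * (mk fun k => (1 - (c : ℚ) ^ (k + 1)) * bernoulli (k + 1) / ((k + 1)! : ℚ))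
          * (exp ℚ - 1) * (rescale (c : ℚ) (exp ℚ) - 1) := by
        rw [X_mul_mk_one_sub_pow_mul_bernoulli]
        ring
    _ = _ := by simp only [mul_assoc]

/-- In `ℚ⟦X⟧` with `1 + T = e^X`, one has
`1/(e^X - 1) - c/(e^{cX} - 1) = ∑_{n ≥ 1} (1 - c^n)(B_n/n) X^{n-1}/(n-1)!`,
stated after clearing the denominators `(e^X - 1)(e^{cX} - 1)`:
the coefficient of `X^k` on the series side is `(1 - c^{k+1}) B_{k+1}/(k+1)!`. -/
theorem stmt_1 (c : ℕ) (hc : 0 < c) :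
    (rescale (c : ℚ) (exp ℚ) - 1) - (c : ℚ) • (exp ℚ - 1) =
      (PowerSeries.mk fun k =>
          (1 - (c : ℚ) ^ (k + 1)) * bernoulli (k + 1) / (Nat.factorial (k + 1) : ℚ)) *
        (exp ℚ - 1) * (rescale (c : ℚ) (exp ℚ) - 1) :=
  stmt_1_general c
end

section
/- For every positive integer m, there exists an integer N_m ≥ 1 such that for every n ≥ 1, p^n divides N_m · ∑_{1 ≤ a ≤ p^n, p ∤ a} a^m. -/
/-- For every prime `p` and positive integer `m`, there exists `N_m ≥ 1` such that
for every `n ≥ 1`, `p^n` divides `N_m · ∑_{1 ≤ a ≤ p^n, p ∤ a} a^m`. -/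
theorem stmt_2 (p : ℕ) (hp : p.Prime) (m : ℕ) (hm : 1 ≤ m) :
    ∃ N : ℕ, 1 ≤ N ∧ ∀ n : ℕ, 1 ≤ n →
      ((p : ℤ) ^ n) ∣
        (N : ℤ) * ∑ a ∈ (Finset.Icc 1 (p ^ n)).filter (fun a => ¬ p ∣ a), (a : ℤ) ^ m := by
  have hp2 := hp.two_le
  have hle : 2 ≤ (p + 1) ^ m := le_trans (by omega) (Nat.le_self_pow (by omega) (p + 1))
  refine ⟨(p + 1) ^ m - 1, by omega, ?_⟩
  intro n hn
  have hpn1 : 1 < p ^ n := Nat.one_lt_pow (by omega) hp.one_lt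
  haveI : NeZero (p ^ n) := ⟨by omega⟩
  -- the unit p+1
  have hcop : Nat.Coprime (p + 1) (p ^ n) := by
    refine Nat.Coprime.pow_right n ?_
    rw [Nat.add_comm, Nat.coprime_add_self_left]
    exact Nat.coprime_one_left p
  have hu : IsUnit ((p + 1 : ℕ) : ZMod (p ^ n)) :=
    (ZMod.isUnit_iff_coprime _ _).mpr hcop
  set u : (ZMod (p ^ n))ˣ := hu.unit with hudef
  have huval : (u : ZMod (p ^ n)) = ((p + 1 : ℕ) : ZMod (p ^ n)) := hu.unit_spec
  set T : ZMod (p ^ n) := ∑ v : (ZMod (p ^ n))ˣ, ((v : ZMod (p ^ n))) ^ m with hT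
  -- multiplication by u permutes the units
  have h1 : (u : ZMod (p ^ n)) ^ m * T = T := by
    rw [hT, Finset.mul_sum]
    exact Fintype.sum_bijective (fun v => u * v) (Group.mulLeft_bijective u)
      _ _ (fun v => by rw [Units.val_mul, mul_pow])
  have h2 : ((u : ZMod (p ^ n)) ^ m - 1) * T = 0 := by
    rw [sub_mul, one_mul, h1, sub_self]
  -- the integer sum reduces to T mod p^n
  have hset : (Finset.Icc 1 (p ^ n)).filter (fun a => ¬ p ∣ a)
      = (Finset.range (p ^ n)).filter (fun a => ¬ p ∣ a) := by
    ext a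
    simp only [Finset.mem_filter, Finset.mem_Icc, Finset.mem_range]
    constructor
    · rintro ⟨⟨h1a, h2a⟩, h3a⟩
      refine ⟨lt_of_le_of_ne h2a ?_, h3a⟩
      rintro rfl
      exact h3a (dvd_pow_self p (by omega))
    · rintro ⟨h1a, h2a⟩
      refine ⟨⟨?_, le_of_lt h1a⟩, h2a⟩
      rcases Nat.eq_zero_or_pos a with rfl | h
      · exact absurd (dvd_zero p) h2a
      · exact h
  have hsum1 : ∑ a ∈ (Finset.range (p ^ n)).filter (fun a => ¬ p ∣ a),
      ((a : ℕ) : ZMod (p ^ n)) ^ m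
      = ∑ x ∈ Finset.univ.filter (fun x : ZMod (p ^ n) => IsUnit x), x ^ m := by
    refine Finset.sum_nbij' (fun a => ((a : ℕ) : ZMod (p ^ n)))
      (fun x => x.val) ?_ ?_ ?_ ?_ ?_
    · intro a ha
      simp only [Finset.mem_filter, Finset.mem_range] at ha
      simp only [Finset.mem_filter, Finset.mem_univ, true_and]
      exact (ZMod.isUnit_iff_coprime _ _).mpr
        (((hp.coprime_iff_not_dvd).mpr ha.2).symm.pow_right n)
    · intro x hx
      simp only [Finset.mem_filter, Finset.mem_univ, true_and] at hx
      simp only [Finset.mem_filter, Finset.mem_range]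
      refine ⟨ZMod.val_lt x, ?_⟩
      have : IsUnit ((x.val : ℕ) : ZMod (p ^ n)) := by
        rwa [ZMod.natCast_val, ZMod.cast_id]
      have hc := (ZMod.isUnit_iff_coprime _ _).mp this
      intro hdvd
      have : p ∣ Nat.gcd x.val (p ^ n) :=
        Nat.dvd_gcd hdvd (dvd_pow_self p (by omega))
      rw [hc] at this
      exact absurd (Nat.le_of_dvd one_pos this) (by omega)
    · intro a ha
      simp only [Finset.mem_filter, Finset.mem_range] at ha
      exact ZMod.val_cast_of_lt ha.1
    · intro x hx
      simp [ZMod.natCast_val, ZMod.cast_id]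
    · intro a ha
      rfl
  have hsum2 : ∑ x ∈ Finset.univ.filter (fun x : ZMod (p ^ n) => IsUnit x), x ^ m = T := by
    rw [hT]
    refine (Finset.sum_bij (fun (v : (ZMod (p ^ n))ˣ) _ => (v : ZMod (p ^ n))) ?_ ?_ ?_ ?_).symm
    · intro v _
      simp only [Finset.mem_filter, Finset.mem_univ, true_and]
      exact v.isUnit
    · intro v _ w _ h
      exact Units.ext h
    · intro x hx
      simp only [Finset.mem_filter, Finset.mem_univ, true_and] at hx
      exact ⟨hx.unit, Finset.mem_univ _, hx.unit_spec⟩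
    · intro v _
      rfl
  -- put everything together
  have hcast : ((((p + 1) ^ m - 1 : ℕ) : ℤ) *
      ∑ a ∈ (Finset.Icc 1 (p ^ n)).filter (fun a => ¬ p ∣ a), (a : ℤ) ^ m : ℤ) = 0 →
      ((p : ℤ) ^ n) ∣ (((p + 1) ^ m - 1 : ℕ) : ℤ) *
      ∑ a ∈ (Finset.Icc 1 (p ^ n)).filter (fun a => ¬ p ∣ a), (a : ℤ) ^ m := by
    intro h; rw [h]; exact dvd_zero _
  have key : (((((p + 1) ^ m - 1 : ℕ) : ℤ) *
      ∑ a ∈ (Finset.Icc 1 (p ^ n)).filter (fun a => ¬ p ∣ a), (a : ℤ) ^ m : ℤ) :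
      ZMod (p ^ n)) = 0 := by
    push_cast [Nat.cast_sub (by omega : 1 ≤ (p + 1) ^ m)]
    have : (∑ a ∈ (Finset.Icc 1 (p ^ n)).filter (fun a => ¬ p ∣ a),
        ((a : ℕ) : ZMod (p ^ n)) ^ m) = T := by
      rw [hset, hsum1, hsum2]
    rw [this]
    have hpu : ((p : ZMod (p ^ n)) + 1) = (u : ZMod (p ^ n)) := by
      rw [huval]; push_cast; ring
    rw [hpu]
    exact h2
  have := (ZMod.intCast_zmod_eq_zero_iff_dvd _ (p ^ n)).mp key
  have h3 : (((p ^ n : ℕ) : ℤ)) = (p : ℤ) ^ n := by push_cast; ring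
  rw [h3] at this
  exact this
end

section
/- Let z be an element of a commutative ring R such that 1 - z^{p^n} is invertible in R for all n ≥ 0. Then the rule μ_z(a + p^nℤ_p) = z^a/(1 - z^{p^n}) for 1 ≤ a ≤ p^n defines a distribution on ℤ_p, i.e., μ_z(a + p^nℤ_p) = ∑_{b ≡ a mod p^n, 1 ≤ b ≤ p^{n+1}} μ_z(b + p^{n+1}ℤ_p). -/
/-- The Koblitz distribution relation: if `1 - z^{p^n}` is invertible in a commutative
ring `R` for all `n ≥ 0`, then `μ_z(a + p^nℤ_p) = z^a/(1 - z^{p^n})` satisfies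
`μ_z(a + p^nℤ_p) = ∑_{j=0}^{p-1} μ_z(a + j p^n + p^{n+1}ℤ_p)`. -/
theorem stmt_4 (p : ℕ) (hp : p.Prime) {R : Type*} [CommRing R] (z : R)
    (hz : ∀ n : ℕ, IsUnit (1 - z ^ p ^ n)) (n a : ℕ) (ha : 1 ≤ a ∧ a ≤ p ^ n) :
    z ^ a * Ring.inverse (1 - z ^ p ^ n) =
      ∑ j ∈ Finset.range p, z ^ (a + j * p ^ n) * Ring.inverse (1 - z ^ p ^ (n + 1)) := by
  set w := z ^ p ^ n with hwdef
  have hw : w ^ p = z ^ p ^ (n + 1) := by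
    rw [hwdef, ← pow_mul, ← pow_succ]
  have key : (1 - w) * ∑ j ∈ Finset.range p, w ^ j = 1 - w ^ p := by
    have h := geom_sum_mul w p
    linear_combination -h
  have h1 := Ring.mul_inverse_cancel _ (hz n)
  have h2 := Ring.mul_inverse_cancel _ (hz (n + 1))
  rw [← hw] at h2 ⊢
  calc z ^ a * Ring.inverse (1 - w)
      = z ^ a * Ring.inverse (1 - w) * ((1 - w ^ p) * Ring.inverse (1 - w ^ p)) := by
        rw [h2, mul_one]
    _ = z ^ a * (∑ j ∈ Finset.range p, w ^ j) * Ring.inverse (1 - w ^ p) *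
          ((1 - w) * Ring.inverse (1 - w)) := by rw [← key]; ring
    _ = ∑ j ∈ Finset.range p, z ^ (a + j * p ^ n) * Ring.inverse (1 - w ^ p) := by
        rw [h1, mul_one, Finset.mul_sum, Finset.sum_mul]
        refine Finset.sum_congr rfl fun j _ => ?_
        rw [pow_add, hwdef, ← pow_mul, mul_comm j (p ^ n)]
end

section
/- Moment formula for the c-corrected Bernoulli measure: ∫_{ℤ_p^×} x^{m-1} dE_c(x) = (1 - c^m)(1 - p^{m-1})·B_m/m for every integer m ≥ 1, where E_c is the measure with E_c(a + p^nℤ_p) = B_1({a/p^n}) - c·B_1({c̄a/p^n}) for c̄c ≡ 1 mod p^n. -/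
/-
Write `N = p ^ n` and `τ a` for the residue of `c⁻¹ a` modulo `N`. Since `c τ(a) ≡ a (mod N)`
and `x ^ (k + 1) - (k + 1) x s ^ k + k s ^ (k + 1)` is divisible by `(x - s) ^ 2`, taking
`x = c τ(a)`, `s = a` and summing over the `p`-units `a < N`, which `τ` permutes, gives
`(k + 1) c ∑ a ^ k τ(a) ≡ (c ^ (k + 1) + k) ∑ a ^ (k + 1) (mod N ^ 2)`. Hence the Riemann sum
equals `(1 - c ^ (k + 1)) / (k + 1) · N⁻¹ ∑ a ^ (k + 1) + (c - 1) / 2 · ∑ a ^ k + O(N)`.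
Faulhaber's formula writes `∑_{a < M} a ^ j = M f_j(M)` with `f_j` a polynomial and
`f_j(0) = B_j`; removing the multiples of `p` and letting `N → 0` `p`-adically gives
`N⁻¹ ∑ a ^ (k + 1) → (1 - p ^ k) B_(k+1)` and `∑ a ^ k → 0`.
-/

open Filter

/-- Value of the `c`-corrected Bernoulli measure `E_c` on the coset `a + p^nℤ_p`
(for `0 ≤ a < p^n`): `E_c(a + p^nℤ_p) = B_1({a/p^n}) - c·B_1({c̄a/p^n})`, with
`B_1(X) = X - 1/2` and `c̄` the inverse of `c` modulo `p^n`. -/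
noncomputable def EcVal (p : ℕ) [Fact p.Prime] (c : ℤ) (n a : ℕ) : ℚ_[p] :=
  (((a % p ^ n : ℕ) : ℚ_[p]) / (p : ℚ_[p]) ^ n - 1 / 2) -
    (c : ℚ_[p]) * ((((((c : ZMod (p ^ n))⁻¹).val * a) % p ^ n : ℕ) : ℚ_[p]) / (p : ℚ_[p]) ^ n
      - 1 / 2)

open Finset Topology

section PowerSums

variable (K : Type*) [Field K]

noncomputable def faulhaber (j : ℕ) (x : K) : K :=
  ∑ i ∈ range (j + 1), (bernoulli i : K) * (j + 1).choose i / (j + 1) * x ^ (j - i)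

variable {K}

theorem sum_range_pow_eq_mul_faulhaber [CharZero K] (M j : ℕ) :
    ∑ a ∈ range M, (a : K) ^ j = M * faulhaber K j M := by
  have h := congrArg (Rat.cast : ℚ → K) (sum_range_pow M j)
  push_cast at h
  rw [h, faulhaber, mul_sum]
  refine sum_congr rfl fun i hi => ?_
  rw [Nat.sub_add_comm (Nat.lt_succ_iff.mp (mem_range.mp hi)), pow_succ]
  ring

theorem faulhaber_zero [CharZero K] (j : ℕ) : faulhaber K j 0 = bernoulli j := by
  rw [faulhaber, sum_range_succ, sum_eq_zero fun i hi => ?_]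
  · have : ((j : K) + 1) ≠ 0 := by exact_mod_cast j.succ_ne_zero
    simp only [Nat.choose_succ_self_right, Nat.cast_add, Nat.cast_one, tsub_self, pow_zero, mul_one,
      zero_add]
    field_simp
  · simp [Nat.sub_ne_zero_of_lt (mem_range.mp hi)]

theorem continuous_faulhaber [TopologicalSpace K] [IsTopologicalRing K] (j : ℕ) :
    Continuous (faulhaber K j) := by
  unfold faulhaber
  fun_prop

end PowerSums

def unitsBelow (p N : ℕ) : Finset ℕ := (range N).filter (fun a => ¬ p ∣ a)

theorem sum_unitsBelow_mul {M : Type*} [AddCommGroup M] {p : ℕ} (hp : 0 < p) (L : ℕ)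
    (f : ℕ → M) :
    ∑ a ∈ unitsBelow p (p * L), f a
      = ∑ a ∈ range (p * L), f a - ∑ t ∈ range L, f (p * t) := by
  have hmul : (range (p * L)).filter (p ∣ ·) = (range L).image (p * ·) := by
    ext a
    simp only [mem_filter, mem_range, mem_image]
    constructor
    · rintro ⟨ha, t, rfl⟩
      exact ⟨t, Nat.lt_of_mul_lt_mul_left ha, rfl⟩
    · rintro ⟨t, ht, rfl⟩
      exact ⟨Nat.mul_lt_mul_of_pos_left ht hp, dvd_mul_right p t⟩
  rw [unitsBelow, ← sum_filter_add_sum_filter_not (range (p * L)) (p ∣ ·) f, hmul,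
    sum_image fun x _ y _ h => Nat.eq_of_mul_eq_mul_left hp h, add_sub_cancel_left]

theorem dvd_val_unit_mul_iff {p N : ℕ} [Fact p.Prime] [NeZero N] (hpN : p ∣ N)
    (u : (ZMod N)ˣ) (a : ℕ) :
    p ∣ ((u : ZMod N) * a).val ↔ p ∣ a := by
  have hu : (ZMod.cast (u : ZMod N) : ZMod p) ≠ 0 :=
    ((u.isUnit.map (ZMod.castHom hpN (ZMod p)))).ne_zero
  rw [← ZMod.natCast_eq_zero_iff, ← ZMod.natCast_eq_zero_iff a p, ← ZMod.cast_eq_val,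
    ZMod.cast_mul hpN, ZMod.cast_natCast hpN, mul_eq_zero, or_iff_right hu]

theorem sum_unitsBelow_val_unit_mul {M : Type*} [AddCommMonoid M] {p N : ℕ} [Fact p.Prime]
    [NeZero N] (hpN : p ∣ N) (u : (ZMod N)ˣ) (f : ℕ → M) :
    ∑ a ∈ unitsBelow p N, f ((u : ZMod N) * a).val = ∑ a ∈ unitsBelow p N, f a := by
  have hinv : ∀ (v : (ZMod N)ˣ) a, a < N →
      (((v⁻¹ : (ZMod N)ˣ) : ZMod N) * (((v : ZMod N) * a).val : ZMod N)).val = a := by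
    intro v a ha
    rw [ZMod.natCast_zmod_val, Units.inv_mul_cancel_left, ZMod.val_natCast, Nat.mod_eq_of_lt ha]
  refine sum_nbij' (fun a => ((u : ZMod N) * a).val)
    (fun a => (((u⁻¹ : (ZMod N)ˣ) : ZMod N) * a).val) ?_ ?_ ?_ ?_ fun _ _ => rfl
  all_goals simp only [unitsBelow, mem_filter, mem_range, dvd_val_unit_mul_iff hpN]
  · exact fun a ha => ⟨ZMod.val_lt _, ha.2⟩
  · exact fun a ha => ⟨ZMod.val_lt _, ha.2⟩
  · exact fun a ha => hinv u a ha.1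
  · exact fun a ha => by simpa using hinv u⁻¹ a ha.1

theorem sum_unitsBelow_pow_eq {K : Type*} [Field K] [CharZero K] {p : ℕ} (hp : 0 < p)
    (L j : ℕ) :
    ∑ a ∈ unitsBelow p (p * L), (a : K) ^ j
      = p * L * faulhaber K j (p * L) - p ^ j * (L * faulhaber K j L) := by
  rw [sum_unitsBelow_mul hp, sum_range_pow_eq_mul_faulhaber, ← sum_range_pow_eq_mul_faulhaber L,
    mul_sum]
  simp only [Nat.cast_mul, mul_pow]

theorem sq_sub_dvd_pow_succ_sub {R : Type*} [CommRing R] (x s : R) (k : ℕ) :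
    (x - s) ^ 2 ∣ x ^ (k + 1) - (k + 1) * x * s ^ k + k * s ^ (k + 1) := by
  convert sq_dvd_add_pow_sub_sub (x - s) s (k + 1) using 1
  push_cast
  ring

theorem sq_dvd_sum_pow_sub_sum_pow_mul_val {p N : ℕ} [Fact p.Prime] [NeZero N] (hpN : p ∣ N)
    (c : ℤ) (u : (ZMod N)ˣ) (hc : (c : ZMod N) = u) (k : ℕ) :
    (N : ℤ) ^ 2 ∣ (c ^ (k + 1) + k) * ∑ a ∈ unitsBelow p N, (a : ℤ) ^ (k + 1)
      - (k + 1) * c *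
        ∑ a ∈ unitsBelow p N, (a : ℤ) ^ k * ((u⁻¹ : (ZMod N)ˣ) * (a : ZMod N)).val := by
  set τ : ℕ → ℕ := fun a => (((u⁻¹ : (ZMod N)ˣ) : ZMod N) * a).val
  have hperm : ∑ a ∈ unitsBelow p N, ((τ a : ℕ) : ℤ) ^ (k + 1)
      = ∑ a ∈ unitsBelow p N, (a : ℤ) ^ (k + 1) :=
    sum_unitsBelow_val_unit_mul hpN u⁻¹ fun b => (b : ℤ) ^ (k + 1)
  have hcong : ∀ a : ℕ, (N : ℤ) ∣ c * τ a - a := fun a => by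
    rw [← ZMod.intCast_zmod_eq_zero_iff_dvd]
    push_cast
    rw [ZMod.natCast_zmod_val, hc, Units.mul_inv_cancel_left, sub_self]
  have hsum : (c ^ (k + 1) + k) * ∑ a ∈ unitsBelow p N, (a : ℤ) ^ (k + 1)
      - (k + 1) * c * ∑ a ∈ unitsBelow p N, (a : ℤ) ^ k * τ a
      = ∑ a ∈ unitsBelow p N, ((c * τ a) ^ (k + 1) - (k + 1) * (c * τ a) * (a : ℤ) ^ k
          + k * (a : ℤ) ^ (k + 1)) := by
    rw [add_mul]
    nth_rw 1 [← hperm]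
    simp only [mul_sum, ← sum_add_distrib, ← sum_sub_distrib]
    exact sum_congr rfl fun a _ => by ring
  rw [hsum]
  exact dvd_sum fun a _ => (pow_dvd_pow_of_dvd (hcong a) 2).trans (sq_sub_dvd_pow_succ_sub _ _ k)

theorem EcVal_eq {p : ℕ} [Fact p.Prime] (c : ℤ) {n a : ℕ} (ha : a < p ^ n) :
    EcVal p c n a = ((a : ℚ_[p]) / p ^ n - 1 / 2)
      - c * (((((c : ZMod (p ^ n))⁻¹ * a).val : ℕ) : ℚ_[p]) / p ^ n - 1 / 2) := by
  rw [EcVal, Nat.mod_eq_of_lt ha, ZMod.val_mul, ZMod.val_natCast, Nat.mod_eq_of_lt ha]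

theorem exists_sum_pow_mul_EcVal_eq {p : ℕ} [Fact p.Prime] {c : ℤ} (hcp : ¬ (p : ℤ) ∣ c)
    (k : ℕ) {n : ℕ} (hn : n ≠ 0) :
    ∃ R : ℤ, ∑ a ∈ unitsBelow p (p ^ n), (a : ℚ_[p]) ^ k * EcVal p c n a
      = (1 - c ^ (k + 1)) / (k + 1)
          * ((∑ a ∈ unitsBelow p (p ^ n), (a : ℚ_[p]) ^ (k + 1)) / p ^ n)
        + (c - 1) / 2 * ∑ a ∈ unitsBelow p (p ^ n), (a : ℚ_[p]) ^ k
        + p ^ n * R / (k + 1) := by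
  have hp : p.Prime := Fact.out
  have : NeZero (p ^ n) := ⟨pow_ne_zero n hp.ne_zero⟩
  have hcop : IsCoprime c ((p ^ n : ℕ) : ℤ) := by
    push_cast
    exact ((Nat.prime_iff_prime_int.mp hp).coprime_iff_not_dvd.mpr hcp).symm.pow_right
  set u := ZMod.unitOfIsCoprime c hcop
  have hinv : (c : ZMod (p ^ n))⁻¹ = ((u⁻¹ : (ZMod (p ^ n))ˣ) : ZMod (p ^ n)) := by
    rw [← ZMod.inv_coe_unit, ZMod.coe_unitOfIsCoprime]
  set A := ∑ a ∈ unitsBelow p (p ^ n),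
    (a : ℚ_[p]) ^ k * ((u⁻¹ : (ZMod (p ^ n))ˣ) * (a : ZMod (p ^ n))).val
  have hS : ∑ a ∈ unitsBelow p (p ^ n), (a : ℚ_[p]) ^ k * EcVal p c n a
      = (∑ a ∈ unitsBelow p (p ^ n), (a : ℚ_[p]) ^ (k + 1)) / p ^ n
        + (c - 1) / 2 * ∑ a ∈ unitsBelow p (p ^ n), (a : ℚ_[p]) ^ k - c * A / p ^ n := by
    simp only [A, sum_div, mul_sum, ← sum_add_distrib, ← sum_sub_distrib]
    refine sum_congr rfl fun a ha => ?_
    rw [EcVal_eq c (mem_range.mp (mem_filter.mp ha).1), hinv]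
    ring
  obtain ⟨R, hR⟩ := sq_dvd_sum_pow_sub_sum_pow_mul_val (dvd_pow_self p hn) c u rfl k
  have hRp : ((c : ℚ_[p]) ^ (k + 1) + k) * ∑ a ∈ unitsBelow p (p ^ n), (a : ℚ_[p]) ^ (k + 1)
      - (k + 1) * c * A = ((p : ℚ_[p]) ^ n) ^ 2 * R := by
    simp only [A]
    exact_mod_cast hR
  have hp0 : (p : ℚ_[p]) ≠ 0 := by exact_mod_cast hp.ne_zero
  have hk0 : (k : ℚ_[p]) + 1 ≠ 0 := by exact_mod_cast k.succ_ne_zero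
  have hcA : c * A = (((c : ℚ_[p]) ^ (k + 1) + k)
      * ∑ a ∈ unitsBelow p (p ^ n), (a : ℚ_[p]) ^ (k + 1) - ((p : ℚ_[p]) ^ n) ^ 2 * R)
        / (k + 1) := by
    rw [eq_div_iff hk0]
    linear_combination -hRp
  refine ⟨R, ?_⟩
  rw [hS, hcA]
  field_simp
  ring

theorem tendsto_pow_p_nhds_zero (p : ℕ) [Fact p.Prime] :
    Tendsto (fun n => (p : ℚ_[p]) ^ n) atTop (𝓝 0) :=
  tendsto_pow_atTop_nhds_zero_of_norm_lt_one Padic.norm_p_lt_one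

theorem tendsto_p_pow_mul_intCast (p : ℕ) [Fact p.Prime] (R : ℕ → ℤ) :
    Tendsto (fun n => (p : ℚ_[p]) ^ n * R n) atTop (𝓝 0) := by
  refine squeeze_zero_norm (fun n => ?_)
    (tendsto_zero_iff_norm_tendsto_zero.mp (tendsto_pow_p_nhds_zero p))
  rw [norm_mul]
  exact mul_le_of_le_one_right (norm_nonneg _) (Padic.norm_int_le_one _)

theorem tendsto_sum_unitsBelow_pow (p : ℕ) [Fact p.Prime] (j : ℕ) :
    Tendsto (fun n => ∑ a ∈ unitsBelow p (p ^ n), (a : ℚ_[p]) ^ j) atTop (𝓝 0) := by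
  have hp : p.Prime := Fact.out
  rw [← tendsto_add_atTop_iff_nat 1]
  simp only [pow_succ' p, sum_unitsBelow_pow_eq hp.pos, Nat.cast_pow]
  have hF := continuous_faulhaber (K := ℚ_[p]) j
  have := ((by fun_prop : Continuous fun x : ℚ_[p] =>
    p * x * faulhaber _ j (p * x) - p ^ j * (x * faulhaber _ j x)).tendsto 0).comp
      (tendsto_pow_p_nhds_zero p)
  simpa [Function.comp_def] using this

theorem tendsto_sum_unitsBelow_pow_div (p : ℕ) [Fact p.Prime] (j : ℕ) :
    Tendsto (fun n => (∑ a ∈ unitsBelow p (p ^ n), (a : ℚ_[p]) ^ (j + 1)) / p ^ n) atTop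
      (𝓝 ((1 - p ^ j) * bernoulli (j + 1))) := by
  have hp : p.Prime := Fact.out
  have hp0 : (p : ℚ_[p]) ≠ 0 := by exact_mod_cast hp.ne_zero
  rw [← tendsto_add_atTop_iff_nat 1]
  have hquot : ∀ n : ℕ,
      (∑ a ∈ unitsBelow p (p ^ (n + 1)), (a : ℚ_[p]) ^ (j + 1)) / p ^ (n + 1)
      = faulhaber _ (j + 1) ((p : ℚ_[p]) * p ^ n)
        - p ^ j * faulhaber _ (j + 1) ((p : ℚ_[p]) ^ n) := by
    intro n
    rw [pow_succ' p, sum_unitsBelow_pow_eq hp.pos]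
    field_simp
    push_cast
    ring
  simp only [hquot]
  have hF := continuous_faulhaber (K := ℚ_[p]) (j + 1)
  have := ((by fun_prop : Continuous fun x : ℚ_[p] =>
    faulhaber _ (j + 1) (p * x) - p ^ j * faulhaber _ (j + 1) x).tendsto 0).comp
      (tendsto_pow_p_nhds_zero p)
  rwa [mul_zero, faulhaber_zero, ← one_sub_mul] at this

theorem tendsto_sum_pow_mul_EcVal {p : ℕ} [Fact p.Prime] {c : ℤ} (hcp : ¬ (p : ℤ) ∣ c)
    (k : ℕ) :
    Tendsto (fun n => ∑ a ∈ unitsBelow p (p ^ n), (a : ℚ_[p]) ^ k * EcVal p c n a) atTop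
      (𝓝 ((1 - c ^ (k + 1)) * (1 - p ^ k) * bernoulli (k + 1) / (k + 1))) := by
  choose R hR using fun n : ℕ => exists_sum_pow_mul_EcVal_eq hcp k n.succ_ne_zero
  rw [← tendsto_add_atTop_iff_nat 1]
  refine Tendsto.congr (fun n => (hR n).symm) ?_
  have hshift := tendsto_add_atTop_nat 1
  have hlim := ((((tendsto_sum_unitsBelow_pow_div p k).comp hshift).const_mul
      ((1 - (c : ℚ_[p]) ^ (k + 1)) / (k + 1))).add
    (((tendsto_sum_unitsBelow_pow p k).comp hshift).const_mul (((c : ℚ_[p]) - 1) / 2))).add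
    (((tendsto_p_pow_mul_intCast p (fun n => R (n - 1))).comp hshift).div_const ((k : ℚ_[p]) + 1))
  convert hlim using 2
  · simp
  · ring

theorem stmt_15_general (p : ℕ) [Fact p.Prime] (c : ℤ)
    (hcp : ¬ (p : ℤ) ∣ c) (m : ℕ) :
    Tendsto (fun n => ∑ a ∈ (Finset.range (p ^ n)).filter (fun a => ¬ p ∣ a),
        ((a : ℚ_[p]) ^ (m - 1)) * EcVal p c n a) atTop
      (nhds ((1 - (c : ℚ_[p]) ^ m) * (1 - (p : ℚ_[p]) ^ (m - 1)) *
        ((bernoulli m : ℚ) : ℚ_[p]) / (m : ℚ_[p]))) := by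
  rcases m with _ | k
  -- For `m = 0` the truncation `0 - 1 = 0` makes the sums those of `m = 1`; both limits vanish.
  · simpa [unitsBelow] using tendsto_sum_pow_mul_EcVal hcp 0
  · simpa [unitsBelow] using tendsto_sum_pow_mul_EcVal hcp k

/-- Moment formula for the `c`-corrected Bernoulli measure:
`∫_{ℤ_p^×} x^{m-1} dE_c(x) = (1 - c^m)(1 - p^{m-1}) B_m/m`, the integral being the
limit of the Riemann sums `∑_{0 ≤ a < p^n, p∤a} a^{m-1} E_c(a + p^nℤ_p)`. -/
theorem stmt_15 (p : ℕ) [Fact p.Prime] (hodd : Odd p) (c : ℤ) (hc1 : c ≠ 1)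
    (hcp : ¬ (p : ℤ) ∣ c) (m : ℕ) (hm : 1 ≤ m) :
    Tendsto (fun n => ∑ a ∈ (Finset.range (p ^ n)).filter (fun a => ¬ p ∣ a),
        ((a : ℚ_[p]) ^ (m - 1)) * EcVal p c n a) atTop
      (nhds ((1 - (c : ℚ_[p]) ^ m) * (1 - (p : ℚ_[p]) ^ (m - 1)) *
        ((bernoulli m : ℚ) : ℚ_[p]) / (m : ℚ_[p]))) :=
  stmt_15_general p c hcp m
end

section
/- Decomposition of a full-moment integral into unit-group pieces: for any 𝒪-valued measure μ on ℤ_p and m ≥ 2, if for each k ≥ 0 there is a measure μ_k on ℤ_p with μ(p^k a + p^{n+k}ℤ_p) = μ_k(a + p^nℤ_p) for all a, n, then ∫_{ℤ_p} x^{m-1} dμ(x) = ∑_{k=0}^∞ p^{k(m-1)} ∫_{ℤ_p^×} x^{m-1} dμ_k(x), the series converging p-adically. -/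
/-!
Splitting the indices `a < p^(n+1)` into units and multiples `a = p c`, the level-`(n+1)` Riemann
sum of `x^q` against `μ_k` is its unit part plus `p^q` times the level-`n` Riemann sum against
`μ_(k+1)`. Telescoping writes the level-`n` Riemann sum against `μ` as
`∑_{k<n} p^{kq} · (unit Riemann sum of μ_k at level n - k)`, and `0^q = 0` kills the remainder.
In an ultrametric field the unit Riemann sums are bounded by the bound of `μ`, and
`‖p^{kq}‖ ≤ (‖p‖^q)^k` is summable, so Tannery's theorem lets `n → ∞` termwise.
-/

open Filter Finset Topology

theorem sum_filter_dvd_range_pow_succ {M : Type*} [AddCommMonoid M] {p : ℕ} (hp : 0 < p)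
    (n : ℕ) (f : ℕ → M) :
    ∑ a ∈ (range (p ^ (n + 1))).filter (p ∣ ·), f a = ∑ c ∈ range (p ^ n), f (p * c) := by
  have himage : (range (p ^ n)).image (p * ·) = (range (p ^ (n + 1))).filter (p ∣ ·) := by
    ext a
    simp only [mem_image, mem_range, mem_filter, pow_succ']
    constructor
    · rintro ⟨c, hc, rfl⟩
      exact ⟨Nat.mul_lt_mul_of_pos_left hc hp, dvd_mul_right p c⟩
    · rintro ⟨ha, c, rfl⟩
      exact ⟨c, Nat.lt_of_mul_lt_mul_left ha, rfl⟩
  rw [← himage, sum_image fun _ _ _ _ h => Nat.eq_of_mul_eq_mul_left hp h]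

section MomentSums

variable {K : Type*} (p q : ℕ)

def momentSum [Semiring K] (ν : ℕ → ℕ → K) (n : ℕ) : K :=
  ∑ a ∈ range (p ^ n), (a : K) ^ q * ν n a

def unitMomentSum [Semiring K] (ν : ℕ → ℕ → K) (n : ℕ) : K :=
  ∑ a ∈ (range (p ^ n)).filter (fun a => ¬ p ∣ a), (a : K) ^ q * ν n a

variable {p q} [CommSemiring K]

theorem momentSum_zero (hq : q ≠ 0) (ν : ℕ → ℕ → K) : momentSum p q ν 0 = 0 := by
  simp [momentSum, hq]

theorem momentSum_succ (hp : 0 < p) (ν : ℕ → ℕ → K) (n : ℕ) :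
    momentSum p q ν (n + 1) = unitMomentSum p q ν (n + 1) +
      (p : K) ^ q * momentSum p q (fun i c => ν (i + 1) (p * c)) n := by
  rw [momentSum, ← sum_filter_not_add_sum_filter _ (p ∣ ·), sum_filter_dvd_range_pow_succ hp,
    momentSum, mul_sum]
  congr 1
  refine sum_congr rfl fun c _ => ?_
  push_cast
  ring

theorem momentSum_eq_sum_unitMomentSum (hp : 0 < p) (hq : q ≠ 0) (ν : ℕ → ℕ → ℕ → K)
    (hν : ∀ k i c, ν k (i + 1) (p * c) = ν (k + 1) i c) (n k : ℕ) :
    momentSum p q (ν k) n =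
      ∑ j ∈ range n, (p : K) ^ (j * q) * unitMomentSum p q (ν (k + j)) (n - j) := by
  induction n generalizing k with
  | zero => simp [momentSum_zero hq]
  | succ n ih =>
    have hshift : (fun i c => ν k (i + 1) (p * c)) = ν (k + 1) := funext₂ (hν k)
    rw [momentSum_succ hp, hshift, ih, sum_range_succ', mul_sum, add_comm]
    congr 1
    · refine sum_congr rfl fun j _ => ?_
      rw [add_right_comm, Nat.add_sub_add_right, add_mul, pow_add, one_mul, ← add_assoc]
      ring
    · simp

end MomentSums

theorem norm_unitMomentSum_le {K : Type*} [SeminormedRing K] [NormOneClass K]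
    [IsUltrametricDist K] {p q : ℕ} {ν : ℕ → ℕ → K} {C : ℝ} (hC : ∀ n a, ‖ν n a‖ ≤ C)
    (n : ℕ) : ‖unitMomentSum p q ν n‖ ≤ C := by
  refine IsUltrametricDist.norm_sum_le_of_forall_le_of_nonneg ((norm_nonneg _).trans (hC 0 0))
    fun a _ => ?_
  calc ‖(a : K) ^ q * ν n a‖ ≤ ‖(a : K)‖ ^ q * ‖ν n a‖ :=
        (norm_mul_le _ _).trans (mul_le_mul_of_nonneg_right (norm_pow_le _ _) (norm_nonneg _))
    _ ≤ 1 * C := by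
        gcongr
        · exact pow_le_one₀ (norm_nonneg _) (IsUltrametricDist.norm_natCast_le_one K a)
        · exact hC n a
    _ = C := one_mul C

theorem hasSum_mul_of_tendsto_sum_range_mul_sub {K : Type*} [NormedRing K] [CompleteSpace K]
    {r J : ℕ → K} {a : ℕ → ℕ → K} {C : ℝ} {I : K} (hr : Summable fun k => ‖r k‖)
    (ha : ∀ k, Tendsto (a k) atTop (𝓝 (J k))) (hC : ∀ k n, ‖a k n‖ ≤ C)
    (hI : Tendsto (fun n => ∑ k ∈ range n, r k * a k (n - k)) atTop (𝓝 I)) :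
    HasSum (fun k => r k * J k) I := by
  have hC0 : 0 ≤ C := (norm_nonneg _).trans (hC 0 0)
  have hJ : ∀ k, ‖J k‖ ≤ C := fun k => le_of_tendsto' (ha k).norm (hC k)
  have hsum : Summable fun k => r k * J k :=
    (hr.mul_right C).of_norm_bounded fun k =>
      (norm_mul_le _ _).trans (mul_le_mul_of_nonneg_left (hJ k) (norm_nonneg _))
  -- Tannery's theorem, for the terms extended by zero beyond the range of summation.
  have hlim : Tendsto (fun n => ∑' k, if k < n then r k * a k (n - k) else 0) atTop
      (𝓝 (∑' k, r k * J k)) := by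
    refine tendsto_tsum_of_dominated_convergence (hr.mul_right C) (fun k => ?_)
      (Eventually.of_forall fun n k => ?_)
    · exact (tendsto_const_nhds.mul ((ha k).comp (tendsto_sub_atTop_nat k))).congr'
        ((eventually_gt_atTop k).mono fun n hn => (if_pos hn).symm)
    · split_ifs
      · exact (norm_mul_le _ _).trans (mul_le_mul_of_nonneg_left (hC _ _) (norm_nonneg _))
      · simpa using mul_nonneg (norm_nonneg (r k)) hC0
  have hrange : ∀ n, (∑' k, if k < n then r k * a k (n - k) else 0) =
      ∑ k ∈ range n, r k * a k (n - k) := fun n =>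
    (tsum_eq_sum fun k hk => if_neg (by simpa using hk)).trans
      (sum_congr rfl fun k hk => if_pos (mem_range.1 hk))
  simp only [hrange] at hlim
  exact tendsto_nhds_unique hlim hI ▸ hsum.hasSum

theorem stmt_17_general (p m : ℕ) (hp : p.Prime) (hm : 2 ≤ m) {K : Type*}
    [NontriviallyNormedField K] [CompleteSpace K] [IsUltrametricDist K]
    (hpn : ‖(p : K)‖ < 1)
    (μ : ℕ → ℕ → K) (μk : ℕ → ℕ → ℕ → K)
    (hbdd : ∃ C, ∀ n a, ‖μ n a‖ ≤ C)
    (hcompat : ∀ k n a, μ (n + k) (p ^ k * a) = μk k n a)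
    (I : K)
    (hI : Tendsto (fun n => ∑ a ∈ Finset.range (p ^ n), (a : K) ^ (m - 1) * μ n a)
      atTop (nhds I))
    (J : ℕ → K)
    (hJ : ∀ k, Tendsto (fun n => ∑ a ∈ (Finset.range (p ^ n)).filter (fun a => ¬ p ∣ a),
        (a : K) ^ (m - 1) * μk k n a) atTop (nhds (J k))) :
    HasSum (fun k => (p : K) ^ (k * (m - 1)) * J k) I := by
  obtain ⟨C, hC⟩ := hbdd
  have hq : m - 1 ≠ 0 := by omega
  have hμk_succ : ∀ k i c, μk k (i + 1) (p * c) = μk (k + 1) i c := fun k i c => by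
    rw [← hcompat, ← hcompat, pow_succ, mul_assoc, add_right_comm, add_assoc]
  have hμk_zero : μk 0 = μ := funext₂ fun n a => by simp [← hcompat]
  have hpow : Summable fun k => ‖(p : K) ^ (k * (m - 1))‖ := by
    simp only [norm_pow, mul_comm _ (m - 1), pow_mul]
    exact summable_geometric_of_lt_one (by positivity) (pow_lt_one₀ (norm_nonneg _) hpn hq)
  refine hasSum_mul_of_tendsto_sum_range_mul_sub (a := fun k => unitMomentSum p (m - 1) (μk k))
    hpow hJ (fun k => norm_unitMomentSum_le fun n a => hcompat k n a ▸ hC _ _)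
    (hI.congr fun n => ?_)
  have h := momentSum_eq_sum_unitMomentSum hp.pos hq μk hμk_succ n 0
  simp only [hμk_zero, zero_add] at h
  exact h

/-- Decomposition of a full moment integral into unit-group pieces.  Here a bounded
measure on `ℤ_p` with values in a complete ultrametric field `K` (with `‖p‖ < 1`) is
encoded by its values `μ n a` on the cosets `a + p^nℤ_p`, satisfying the distribution
relation.  If measures `μ_k` satisfy `μ(p^k a + p^{n+k}ℤ_p) = μ_k(a + p^nℤ_p)`, and if
`I = ∫_{ℤ_p} x^{m-1} dμ` and `J k = ∫_{ℤ_p^×} x^{m-1} dμ_k` (as limits of Riemann sums),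
then for `m ≥ 2`: `I = ∑_{k=0}^∞ p^{k(m-1)} J k`, the series converging `p`-adically. -/
theorem stmt_17 (p m : ℕ) (hp : p.Prime) (hm : 2 ≤ m) {K : Type*}
    [NontriviallyNormedField K] [CompleteSpace K] [IsUltrametricDist K]
    (hpn : ‖(p : K)‖ < 1)
    (μ : ℕ → ℕ → K) (μk : ℕ → ℕ → ℕ → K)
    (hbdd : ∃ C, ∀ n a, ‖μ n a‖ ≤ C)
    (hdist : ∀ n a, μ n a = ∑ j ∈ Finset.range p, μ (n + 1) (a + j * p ^ n))
    (hcompat : ∀ k n a, μ (n + k) (p ^ k * a) = μk k n a)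
    (I : K)
    (hI : Tendsto (fun n => ∑ a ∈ Finset.range (p ^ n), (a : K) ^ (m - 1) * μ n a)
      atTop (nhds I))
    (J : ℕ → K)
    (hJ : ∀ k, Tendsto (fun n => ∑ a ∈ (Finset.range (p ^ n)).filter (fun a => ¬ p ∣ a),
        (a : K) ^ (m - 1) * μk k n a) atTop (nhds (J k))) :
    HasSum (fun k => (p : K) ^ (k * (m - 1)) * J k) I :=
  stmt_17_general p m hp hm hpn μ μk hbdd hcompat I hI J hJ
end

section
/- If f ∈ 𝒪_F[[T]]^× satisfies the Coleman norm relation 𝒩(f) = σ_F(f) (i.e., ∏_{ξ ∈ μ_p} f(ξ(1+T) - 1) = (σ_F f)((1+T)^p - 1)), then its integral logarithm derivative g := (Df/f) - [p]σ_F(Df/f) satisfies 𝔗(g) = 0, where D = (1+T)d/dT, ([p]h)(T) = h((1+T)^p - 1), and 𝔗 is the reduced trace with ([p]𝔗h)(T) = (1/p)∑_{ξ∈μ_p} h(ξ(1+T)-1). -/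
open PowerSeries

/-- The (analytic) substitution `f(T) ↦ f(ξ(1+T) - 1)` for `‖ξ - 1‖ < 1`, defined
coefficientwise:  the coefficient of `T^m` in `f(ξ(1+T)-1)` is
`∑_{n≥0} f_{m+n} · C(m+n, m) · ξ^m · (ξ-1)^n` (a convergent series in `K`). -/
noncomputable def twistSubst {K : Type*} [NontriviallyNormedField K] [CompleteSpace K]
    (ξ : K) (f : PowerSeries K) : PowerSeries K :=
  PowerSeries.mk fun m =>
    ∑' n : ℕ, coeff (m + n) f * ((m + n).choose m : K) * ξ ^ m * (ξ - 1) ^ n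

/-- The ring operator `[p] : f(T) ↦ f((1+T)^p - 1)` (a formal substitution). -/
noncomputable def pSubst {K : Type*} [Field K] (p : ℕ) (f : PowerSeries K) :
    PowerSeries K :=
  PowerSeries.mk fun m =>
    ∑ n ∈ Finset.range (m + 1),
      coeff n f * coeff m (((1 + X : PowerSeries K) ^ p - 1) ^ n)

/-!
On polynomials the twist `f ↦ f(ξ(1+T) - 1)` is composition with `ξ(1+T) - 1`, and on `𝒪_K⟦T⟧`
it is continuous for coefficientwise convergence (Tannery's theorem: the terms of the series
defining a coefficient are bounded by `‖ξ - 1‖ⁿ`). Approximating by truncations, the twist is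
therefore multiplicative on `𝒪_K⟦T⟧` and fixes every `[p]h` when `ξ ^ p = 1`; it commutes with
`D = (1+T) d/dT` by a termwise computation. Applying the derivation `D` to the norm relation
`∏_ξ f(ξ(1+T) - 1) = [p]σ(f)` and cancelling the (nonzero) norm gives
`∑_ξ (Df/f)(ξ(1+T) - 1) = p · [p]σ(Df/f)`. Each twist fixes `[p]σ(Df/f)` and there are `p`
roots of unity, so the twists of `g` sum to zero.
-/

open Filter (Tendsto atTop)
open Topology
open scoped PowerSeries.WithPiTopology

theorem PowerSeries.derivative_map {R S : Type*} [CommRing R] [CommRing S] (σ : R →+* S)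
    (f : R⟦X⟧) : d⁄dX S (map σ f) = map σ (d⁄dX R f) := by
  ext n
  simp [coeff_derivative]

theorem Derivation.map_prod_eq_sum_mul_prod {ι R A : Type*} [CommSemiring R] [CommSemiring A]
    [Algebra R A] (D : Derivation R A A) (s : Finset ι) {g h : ι → A}
    (hg : ∀ i ∈ s, D (g i) = h i * g i) : D (∏ i ∈ s, g i) = (∑ i ∈ s, h i) * ∏ i ∈ s, g i := by
  classical
  induction s using Finset.induction_on with
  | empty => simp
  | insert a s ha ih =>
    rw [Finset.prod_insert ha, Finset.sum_insert ha, Derivation.leibniz, smul_eq_mul, smul_eq_mul,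
      ih fun i hi => hg i (Finset.mem_insert_of_mem hi), hg a (Finset.mem_insert_self a s)]
    ring

section IntegralSeries

variable (K : Type*) [NormedField K] [IsUltrametricDist K]

def integralSeries : Subring K⟦X⟧ where
  carrier := {f | ∀ n, ‖coeff n f‖ ≤ 1}
  mul_mem' {f g} hf hg n := by
    rw [coeff_mul]
    refine IsUltrametricDist.norm_sum_le_of_forall_le_of_nonneg zero_le_one fun i _ => ?_
    rw [norm_mul]
    exact mul_le_one₀ (hf _) (norm_nonneg _) (hg _)
  one_mem' n := by
    rw [coeff_one]
    split_ifs <;> simp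
  add_mem' {f g} hf hg n := by
    rw [map_add]
    exact (IsUltrametricDist.norm_add_le_max _ _).trans (max_le (hf n) (hg n))
  zero_mem' n := by simp
  neg_mem' {f} hf n := by
    rw [map_neg, norm_neg]
    exact hf n

variable {K}

theorem mem_integralSeries {f : K⟦X⟧} : f ∈ integralSeries K ↔ ∀ n, ‖coeff n f‖ ≤ 1 :=
  Iff.rfl

theorem X_mem_integralSeries : (X : K⟦X⟧) ∈ integralSeries K := fun n => by
  rw [coeff_X]
  split_ifs <;> simp

theorem derivative_mem_integralSeries {f : K⟦X⟧} (hf : f ∈ integralSeries K) :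
    d⁄dX K f ∈ integralSeries K := fun n => by
  rw [coeff_derivative, norm_mul]
  exact mul_le_one₀ (hf _) (norm_nonneg _)
    (by exact_mod_cast IsUltrametricDist.norm_natCast_le_one K (n + 1))

theorem map_mem_integralSeries {f : K⟦X⟧} (hf : f ∈ integralSeries K) {σ : K →+* K}
    (hσ : ∀ x, ‖σ x‖ ≤ ‖x‖) : map σ f ∈ integralSeries K := fun n =>
  (coeff_map σ n f ▸ hσ _).trans (hf n)

theorem coe_trunc_mem_integralSeries {f : K⟦X⟧} (hf : f ∈ integralSeries K) (N : ℕ) :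
    (trunc N f : K⟦X⟧) ∈ integralSeries K := fun n => by
  rw [Polynomial.coeff_coe, coeff_trunc]
  split_ifs
  · exact hf n
  · simp

theorem inv_mem_integralSeries {f : K⟦X⟧} (hf : f ∈ integralSeries K)
    (h0 : ‖constantCoeff f‖ = 1) : f⁻¹ ∈ integralSeries K := by
  intro n
  induction n using Nat.strong_induction_on with
  | _ n ih =>
    rw [coeff_inv]
    split_ifs
    · rw [norm_inv, h0, inv_one]
    · rw [norm_mul, norm_neg, norm_inv, h0, inv_one, one_mul]
      refine IsUltrametricDist.norm_sum_le_of_forall_le_of_nonneg zero_le_one fun x _ => ?_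
      split_ifs with hlt
      · rw [norm_mul]
        exact mul_le_one₀ (hf _) (norm_nonneg _) (ih _ hlt)
      · simp

end IntegralSeries

section PSubst

variable {K : Type*} [Field K] (p : ℕ)

theorem coeff_pow_one_add_X_pow_sub_one_eq_zero {m n : ℕ} (h : m < n) :
    coeff m (((1 + X : K⟦X⟧) ^ p - 1) ^ n) = 0 := by
  have hX : (X : K⟦X⟧) ∣ (1 + X) ^ p - 1 := by simp [X_dvd_iff]
  exact X_pow_dvd_iff.mp (pow_dvd_pow_of_dvd hX n) m h

theorem hasSubst_one_add_X_pow_sub_one : HasSubst ((1 + X : K⟦X⟧) ^ p - 1) :=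
  HasSubst.of_constantCoeff_zero' (by simp)

theorem pSubst_eq_subst (f : K⟦X⟧) : pSubst p f = f.subst ((1 + X : K⟦X⟧) ^ p - 1) := by
  ext m
  rw [coeff_subst' (hasSubst_one_add_X_pow_sub_one p), pSubst, coeff_mk,
    finsum_eq_sum_of_support_subset (s := Finset.range (m + 1))]
  · simp only [smul_eq_mul]
  · intro n hn
    by_contra hnm
    rw [Finset.coe_range, Set.mem_Iio, not_lt] at hnm
    exact hn <| show coeff n f • coeff m _ = 0 by
      rw [coeff_pow_one_add_X_pow_sub_one_eq_zero p (show m < n by omega), smul_zero]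

theorem pSubst_mul (f g : K⟦X⟧) : pSubst p (f * g) = pSubst p f * pSubst p g := by
  simp only [pSubst_eq_subst, subst_mul (hasSubst_one_add_X_pow_sub_one p)]

theorem pSubst_coe (P : Polynomial K) :
    pSubst p (P : K⟦X⟧) = (P.comp ((1 + Polynomial.X : Polynomial K) ^ p - 1) : Polynomial K) := by
  have hu : ((1 + X : K⟦X⟧) ^ p - 1)
      = Polynomial.coeToPowerSeries.algHom K ((1 + Polynomial.X : Polynomial K) ^ p - 1) := by simp
  rw [pSubst_eq_subst, subst_coe (hasSubst_one_add_X_pow_sub_one p), hu,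
    Polynomial.aeval_algHom_apply, Polynomial.comp_eq_aeval]
  rfl

theorem constantCoeff_pSubst (f : K⟦X⟧) : constantCoeff (pSubst p f) = constantCoeff f := by
  rw [← coeff_zero_eq_constantCoeff_apply, ← coeff_zero_eq_constantCoeff_apply, pSubst, coeff_mk]
  simp

theorem tendsto_pSubst_trunc [TopologicalSpace K] (f : K⟦X⟧) :
    Tendsto (fun N => pSubst p (trunc N f : K⟦X⟧)) atTop (𝓝 (pSubst p f)) := by
  rw [WithPiTopology.tendsto_iff_coeff_tendsto]
  refine fun m => tendsto_atTop_of_eventually_const fun N (hN : m + 1 ≤ N) => ?_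
  simp only [pSubst, coeff_mk]
  refine Finset.sum_congr rfl fun n hn => ?_
  rw [coeff_coe_trunc_of_lt (by simp at hn; omega)]

theorem one_add_X_mul_derivative_one_add_X_pow (n : ℕ) :
    (1 + X) * d⁄dX K ((1 + X : K⟦X⟧) ^ n) = (n : K⟦X⟧) * (1 + X) ^ n := by
  cases n with
  | zero => simp
  | succ n => simp only [derivative_pow, map_add, derivative_one, derivative_X]; push_cast; ring

theorem one_add_X_mul_derivative_pSubst (g : K⟦X⟧) :
    (1 + X) * d⁄dX K (pSubst p g) = (p : K⟦X⟧) * pSubst p ((1 + X) * d⁄dX K g) := by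
  have hu := hasSubst_one_add_X_pow_sub_one (K := K) p
  have h1X : (1 + X : K⟦X⟧).subst ((1 + X : K⟦X⟧) ^ p - 1) = (1 + X) ^ p := by
    rw [subst_add hu, subst_X hu, ← map_one (C (R := K)), subst_C]
    simp
  rw [pSubst_eq_subst, pSubst_eq_subst, derivative_subst hu, subst_mul hu, h1X, map_sub,
    derivative_one, sub_zero]
  linear_combination subst ((1 + X : K⟦X⟧) ^ p - 1) (d⁄dX K g) *
    one_add_X_mul_derivative_one_add_X_pow (K := K) p

end PSubst

theorem pSubst_mem_integralSeries {K : Type*} [NormedField K] [IsUltrametricDist K] (p : ℕ)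
    {f : K⟦X⟧} (hf : f ∈ integralSeries K) : pSubst p f ∈ integralSeries K := fun m => by
  have hu : (1 + X : K⟦X⟧) ^ p - 1 ∈ integralSeries K :=
    sub_mem (pow_mem (add_mem (one_mem _) X_mem_integralSeries) p) (one_mem _)
  rw [pSubst, coeff_mk]
  refine IsUltrametricDist.norm_sum_le_of_forall_le_of_nonneg zero_le_one fun n _ => ?_
  rw [norm_mul]
  exact mul_le_one₀ (hf n) (norm_nonneg _) (pow_mem hu n m)

section Twist

variable {K : Type*} [NontriviallyNormedField K] [CompleteSpace K] {ξ : K}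

theorem twistSubst_coe (ξ : K) (P : Polynomial K) :
    twistSubst ξ (P : K⟦X⟧)
      = (P.comp (Polynomial.C ξ * (1 + Polynomial.X) - 1) : Polynomial K) := by
  have hcomp : P.comp (Polynomial.C ξ * (1 + Polynomial.X) - 1)
      = (Polynomial.taylor (ξ - 1) P).comp (Polynomial.C ξ * Polynomial.X) := by
    rw [Polynomial.taylor_apply, Polynomial.comp_assoc, Polynomial.add_comp, Polynomial.X_comp,
      Polynomial.C_comp, Polynomial.C_sub, Polynomial.C_1]
    ring_nf
  ext m
  rw [hcomp, Polynomial.coeff_coe, Polynomial.comp_C_mul_X_coeff, Polynomial.taylor_coeff,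
    Polynomial.eval_eq_sum_range' (Nat.lt_succ_of_le
      ((Polynomial.natDegree_hasseDeriv_le P m).trans (Nat.sub_le _ _))),
    twistSubst, coeff_mk, tsum_eq_sum (s := Finset.range (P.natDegree + 1)), Finset.sum_mul]
  · refine Finset.sum_congr rfl fun n _ => ?_
    rw [Polynomial.hasseDeriv_coeff, Polynomial.coeff_coe, add_comm n m]
    ring
  · intro n hn
    rw [Finset.mem_range, not_lt] at hn
    rw [Polynomial.coeff_coe, Polynomial.coeff_eq_zero_of_natDegree_lt (by omega)]
    ring

theorem twistSubst_one_add_X (ξ : K) : twistSubst ξ (1 + X : K⟦X⟧) = C ξ * (1 + X) := by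
  have h := twistSubst_coe ξ (1 + Polynomial.X)
  simp only [Polynomial.add_comp, Polynomial.one_comp, Polynomial.X_comp, add_sub_cancel] at h
  simpa using h

theorem derivative_twistSubst (ξ : K) (f : K⟦X⟧) :
    d⁄dX K (twistSubst ξ f) = C ξ * twistSubst ξ (d⁄dX K f) := by
  ext m
  simp only [coeff_derivative, twistSubst, coeff_mk, coeff_C_mul]
  rw [← tsum_mul_right, ← tsum_mul_left]
  congr 1
  funext n
  have hchoose : ((m + n + 1 : ℕ) : K) * ((m + n).choose m : ℕ)
      = ((m + n + 1).choose (m + 1) : ℕ) * ((m + 1 : ℕ) : K) := by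
    rw [← Nat.cast_mul, ← Nat.cast_mul, Nat.add_one_mul_choose_eq]
  rw [show m + 1 + n = m + n + 1 by omega]
  push_cast at hchoose ⊢
  linear_combination -(coeff (m + n + 1) f * ξ ^ (m + 1) * (ξ - 1) ^ n) * hchoose

variable [IsUltrametricDist K]

theorem tendsto_twistSubst {ι : Type*} {l : Filter ι} {F : ι → K⟦X⟧} {f : K⟦X⟧}
    (hξ : ‖ξ - 1‖ < 1) (hF : ∀ i, F i ∈ integralSeries K) (h : Tendsto F l (𝓝 f)) :
    Tendsto (fun i => twistSubst ξ (F i)) l (𝓝 (twistSubst ξ f)) := by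
  rw [WithPiTopology.tendsto_iff_coeff_tendsto] at h ⊢
  intro m
  simp only [twistSubst, coeff_mk]
  refine tendsto_tsum_of_dominated_convergence (bound := fun n => ‖ξ‖ ^ m * ‖ξ - 1‖ ^ n)
    ((summable_geometric_of_lt_one (norm_nonneg _) hξ).mul_left _)
    (fun n => (((h (m + n)).mul_const _).mul_const _).mul_const _) (.of_forall fun i n => ?_)
  simp only [norm_mul, norm_pow]
  have hc := IsUltrametricDist.norm_natCast_le_one K ((m + n).choose m)
  calc ‖coeff (m + n) (F i)‖ * ‖((m + n).choose m : K)‖ * ‖ξ‖ ^ m * ‖ξ - 1‖ ^ n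
      ≤ 1 * 1 * ‖ξ‖ ^ m * ‖ξ - 1‖ ^ n := by gcongr; exact hF i _
    _ = ‖ξ‖ ^ m * ‖ξ - 1‖ ^ n := by ring

theorem tendsto_twistSubst_trunc (hξ : ‖ξ - 1‖ < 1) {f : K⟦X⟧} (hf : f ∈ integralSeries K) :
    Tendsto (fun N => twistSubst ξ (trunc N f : K⟦X⟧)) atTop (𝓝 (twistSubst ξ f)) :=
  tendsto_twistSubst hξ (coe_trunc_mem_integralSeries hf) (WithPiTopology.tendsto_trunc_atTop K f)

theorem twistSubst_mul (hξ : ‖ξ - 1‖ < 1) {f g : K⟦X⟧} (hf : f ∈ integralSeries K)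
    (hg : g ∈ integralSeries K) : twistSubst ξ (f * g) = twistSubst ξ f * twistSubst ξ g := by
  have hprod := tendsto_twistSubst hξ
    (fun N => mul_mem (coe_trunc_mem_integralSeries hf N) (coe_trunc_mem_integralSeries hg N))
    ((WithPiTopology.tendsto_trunc_atTop K f).mul (WithPiTopology.tendsto_trunc_atTop K g))
  simp only [← Polynomial.coe_mul, twistSubst_coe, Polynomial.mul_comp] at hprod
  simp only [Polynomial.coe_mul, ← twistSubst_coe] at hprod
  exact tendsto_nhds_unique hprod
    ((tendsto_twistSubst_trunc hξ hf).mul (tendsto_twistSubst_trunc hξ hg))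

theorem twistSubst_sub (hξ : ‖ξ - 1‖ < 1) {f g : K⟦X⟧} (hf : f ∈ integralSeries K)
    (hg : g ∈ integralSeries K) : twistSubst ξ (f - g) = twistSubst ξ f - twistSubst ξ g := by
  have hdiff := tendsto_twistSubst hξ
    (fun N => sub_mem (coe_trunc_mem_integralSeries hf N) (coe_trunc_mem_integralSeries hg N))
    ((WithPiTopology.tendsto_trunc_atTop K f).sub (WithPiTopology.tendsto_trunc_atTop K g))
  simp only [← Polynomial.coe_sub, twistSubst_coe, Polynomial.sub_comp] at hdiff
  simp only [Polynomial.coe_sub, ← twistSubst_coe] at hdiff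
  exact tendsto_nhds_unique hdiff
    ((tendsto_twistSubst_trunc hξ hf).sub (tendsto_twistSubst_trunc hξ hg))

theorem twistSubst_D (hξ : ‖ξ - 1‖ < 1) {f : K⟦X⟧} (hf : f ∈ integralSeries K) :
    twistSubst ξ ((1 + X) * d⁄dX K f) = (1 + X) * d⁄dX K (twistSubst ξ f) := by
  rw [twistSubst_mul hξ (add_mem (one_mem _) X_mem_integralSeries)
    (derivative_mem_integralSeries hf), twistSubst_one_add_X, derivative_twistSubst]
  ring

theorem twistSubst_pSubst (p : ℕ) (hξ : ‖ξ - 1‖ < 1) (hξp : ξ ^ p = 1) {h : K⟦X⟧}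
    (hh : h ∈ integralSeries K) : twistSubst ξ (pSubst p h) = pSubst p h := by
  have hU : ((1 + Polynomial.X : Polynomial K) ^ p - 1).comp
      (Polynomial.C ξ * (1 + Polynomial.X) - 1) = (1 + Polynomial.X) ^ p - 1 := by
    rw [Polynomial.sub_comp, Polynomial.pow_comp, Polynomial.add_comp, Polynomial.one_comp,
      Polynomial.X_comp, add_sub_cancel, mul_pow, ← Polynomial.C_pow, hξp, Polynomial.C_1,
      one_mul]
  have hpoly (N : ℕ) :
      twistSubst ξ (pSubst p (trunc N h : K⟦X⟧)) = pSubst p (trunc N h : K⟦X⟧) := by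
    rw [pSubst_coe, twistSubst_coe, Polynomial.comp_assoc, hU]
  have hlim := tendsto_twistSubst hξ
    (fun N => pSubst_mem_integralSeries p (coe_trunc_mem_integralSeries hh N))
    (tendsto_pSubst_trunc p h)
  simp only [hpoly] at hlim
  exact tendsto_nhds_unique hlim (tendsto_pSubst_trunc p h)

end Twist

theorem stmt_18_general (p : ℕ) {K : Type*}
    [NontriviallyNormedField K] [CompleteSpace K] [IsUltrametricDist K]
    (S : Finset K) (hcard : S.card = p) (hS : ∀ x : K, x ∈ S ↔ x ^ p = 1)
    (hSnorm : ∀ ξ ∈ S, ‖ξ - 1‖ < 1)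
    (σ : K →+* K) (hσ : ∀ x, ‖σ x‖ = ‖x‖)
    (f : PowerSeries K) (hfint : ∀ n, ‖coeff n f‖ ≤ 1)
    (hfunit : ‖constantCoeff f‖ = 1)
    (hNorm : ∏ ξ ∈ S, twistSubst ξ f = pSubst p (PowerSeries.map σ f)) :
    ∑ ξ ∈ S, twistSubst ξ
        (((1 + X) * d⁄dX K f * f⁻¹) -
          pSubst p (PowerSeries.map σ ((1 + X) * d⁄dX K f * f⁻¹))) = 0 := by
  set q := (1 + X) * d⁄dX K f * f⁻¹
  have hf : f ∈ integralSeries K := mem_integralSeries.mpr hfint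
  have hf0 : constantCoeff f ≠ 0 := fun h => by simp [h] at hfunit
  have hq : q ∈ integralSeries K :=
    mul_mem (mul_mem (add_mem (one_mem _) X_mem_integralSeries) (derivative_mem_integralSeries hf))
      (inv_mem_integralSeries hf hfunit)
  have hσq : map σ q ∈ integralSeries K := map_mem_integralSeries hq fun x => (hσ x).le
  have hqf : q * f = (1 + X) * d⁄dX K f := by
    rw [mul_assoc, PowerSeries.inv_mul_cancel _ hf0, mul_one]
  have hlogNorm : (1 + X) * d⁄dX K (∏ ξ ∈ S, twistSubst ξ f)
      = (∑ ξ ∈ S, twistSubst ξ q) * ∏ ξ ∈ S, twistSubst ξ f :=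
    ((1 + X : K⟦X⟧) • d⁄dX K).map_prod_eq_sum_mul_prod S fun ξ hξ => by
      rw [Derivation.smul_apply, smul_eq_mul, ← twistSubst_D (hSnorm ξ hξ) hf, ← hqf,
        twistSubst_mul (hSnorm ξ hξ) hq hf]
  have hlogFrob : (1 + X) * d⁄dX K (pSubst p (map σ f))
      = ((p : K⟦X⟧) * pSubst p (map σ q)) * pSubst p (map σ f) := by
    have hσ1X : map σ (1 + X : K⟦X⟧) = 1 + X := by rw [map_add, map_one, map_X]
    rw [one_add_X_mul_derivative_pSubst, derivative_map, ← hσ1X, ← map_mul, ← hqf, map_mul,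
      pSubst_mul, mul_assoc]
  have hF : pSubst p (map σ f) ≠ 0 := fun h0 => hf0 <| by
    have hc := congrArg constantCoeff h0
    rwa [constantCoeff_pSubst, ← coeff_zero_eq_constantCoeff_apply, coeff_map,
      coeff_zero_eq_constantCoeff_apply, map_zero, map_eq_zero_iff σ σ.injective] at hc
  have hTrace : ∑ ξ ∈ S, twistSubst ξ q = p * pSubst p (map σ q) := by
    rw [hNorm, hlogFrob] at hlogNorm
    exact (mul_right_cancel₀ hF hlogNorm).symm
  calc ∑ ξ ∈ S, twistSubst ξ (q - pSubst p (map σ q))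
      = ∑ ξ ∈ S, (twistSubst ξ q - pSubst p (map σ q)) := Finset.sum_congr rfl fun ξ hξ => by
        rw [twistSubst_sub (hSnorm ξ hξ) hq (pSubst_mem_integralSeries p hσq),
          twistSubst_pSubst p (hSnorm ξ hξ) ((hS ξ).1 hξ) hσq]
    _ = 0 := by rw [Finset.sum_sub_distrib, Finset.sum_const, hcard, nsmul_eq_mul, hTrace, sub_self]

/-- If `f ∈ 𝒪_F⟦T⟧^×` satisfies Coleman's norm relation `𝒩(f) = σ_F(f)`, i.e.
`∏_{ξ ∈ μ_p} f(ξ(1+T)-1) = (σ_F f)((1+T)^p - 1)`, then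
`g := Df/f - [p]σ_F(Df/f)` (with `D = (1+T)d/dT`) satisfies `𝔗(g) = 0`, i.e.
`∑_{ξ ∈ μ_p} g(ξ(1+T)-1) = 0` (which is `p·[p]𝔗g = 0`). -/
theorem stmt_18 (p : ℕ) (hp : p.Prime) (hodd : Odd p) {K : Type*}
    [NontriviallyNormedField K] [CompleteSpace K] [IsUltrametricDist K] [CharZero K]
    (S : Finset K) (hcard : S.card = p) (hS : ∀ x : K, x ∈ S ↔ x ^ p = 1)
    (hSnorm : ∀ ξ ∈ S, ‖ξ - 1‖ < 1)
    (σ : K →+* K) (hσ : ∀ x, ‖σ x‖ = ‖x‖)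
    (f : PowerSeries K) (hfint : ∀ n, ‖coeff n f‖ ≤ 1)
    (hfunit : ‖constantCoeff f‖ = 1)
    (hNorm : ∏ ξ ∈ S, twistSubst ξ f = pSubst p (PowerSeries.map σ f)) :
    ∑ ξ ∈ S, twistSubst ξ
        (((1 + X) * d⁄dX K f * f⁻¹) -
          pSubst p (PowerSeries.map σ ((1 + X) * d⁄dX K f * f⁻¹))) = 0 :=
  stmt_18_general p S hcard hS hSnorm σ hσ f hfint hfunit hNorm
end
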